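/- Let G be a transitive graph and suppose p > p_c(G) is such that the two-point function P_p(x ↔ y) tends to 0 as the distance between x and y tends to infinity. Then there exist vertices x, y such that with positive probability both x and y lie in infinite clusters and x is not connected to y; consequently percolation at p has more than one infinite cluster with positive probability. -/

import Mathlib

open MeasureTheory Filter Set
open scoped ENNReal

namespace SimpleGraph

variable {V : Type*}

/-- n-step transition kernel of the simple random walk. -/
noncomputable def srw (G : SimpleGraph V) [DecidableEq V] [∀ v, Fintype (G.neighborSet v)] :
    ℕ → V → V → ℝ
  | 0, x, y => if x = y then 1 else 0
  | n + 1, x, y => ∑ z ∈ G.neighborFinset x, (G.degree x : ℝ)⁻¹ * srw G n z y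

/-- auxiliary kernel of the non-backtracking walk: `nbwAux n prev cur y` is the probability that
the walk currently at `cur`, having just come from `prev`, is at `y` after `n` more steps. -/
noncomputable def nbwAux (G : SimpleGraph V) [DecidableEq V] [∀ v, Fintype (G.neighborSet v)] :
    ℕ → V → V → V → ℝ
  | 0, _, c, y => if c = y then 1 else 0
  | n + 1, prev, c, y =>
      ∑ z ∈ (G.neighborFinset c).erase prev, ((G.degree c : ℝ) - 1)⁻¹ * nbwAux G n c z y

/-- n-step transition kernel of the non-backtracking random walk (first step uniform). -/
noncomputable def nbw (G : SimpleGraph V) [DecidableEq V] [∀ v, Fintype (G.neighborSet v)] :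
    ℕ → V → V → ℝ
  | 0, x, y => if x = y then 1 else 0
  | n + 1, x, y => ∑ z ∈ G.neighborFinset x, (G.degree x : ℝ)⁻¹ * nbwAux G n x z y

/-- spectral radius of the simple random walk, `ρ = lim (p^{2n}(x,x))^{1/2n}`. -/
noncomputable def spectralRadius (G : SimpleGraph V) [DecidableEq V]
    [∀ v, Fintype (G.neighborSet v)] (x : V) : ℝ :=
  Filter.limsup (fun n : ℕ => (G.srw (2 * n) x x) ^ ((2 * n : ℝ))⁻¹) Filter.atTop

/-- a walk all of whose edges are open in the percolation configuration `ω`. -/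
def openWalk (G : SimpleGraph V) (ω : G.edgeSet → Bool) {x y : V} (w : G.Walk x y) : Prop :=
  ∀ e (he : e ∈ w.edges), ω ⟨e, w.edges_subset_edgeSet he⟩ = true

/-- `x` and `y` are connected by an open path. -/
def percConn (G : SimpleGraph V) (ω : G.edgeSet → Bool) (x y : V) : Prop :=
  ∃ w : G.Walk x y, G.openWalk ω w

/-- the open cluster of `x`. -/
def percCluster (G : SimpleGraph V) (ω : G.edgeSet → Bool) (x : V) : Set V :=
  {y | G.percConn ω x y}

/-- the event that the shortest open path between `x` and `y` has length exactly `n`. -/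
def shortestOpenConn (G : SimpleGraph V) (ω : G.edgeSet → Bool) (x y : V) (n : ℕ) : Prop :=
  (∃ w : G.Walk x y, w.IsPath ∧ w.length = n ∧ G.openWalk ω w) ∧
    ∀ w : G.Walk x y, G.openWalk ω w → n ≤ w.length

/-- `μ` is the Bernoulli(p) bond percolation measure: a probability measure under which the
states of edges are i.i.d., each open with probability `p`. -/
def IsBernoulliPercolation (G : SimpleGraph V) (p : ℝ)
    (μ : Measure (G.edgeSet → Bool)) : Prop :=
  IsProbabilityMeasure μ ∧
    ∀ (s : Finset G.edgeSet) (b : G.edgeSet → Bool),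
      μ {ω | ∀ e ∈ s, ω e = b e} = ∏ e ∈ s, ENNReal.ofReal (if b e then p else 1 - p)

/-- critical percolation probability, relative to a family `P p` of percolation measures. -/
noncomputable def percCritical (G : SimpleGraph V)
    (P : ℝ → Measure (G.edgeSet → Bool)) : ℝ :=
  sInf {p : ℝ | p ∈ Set.Icc (0:ℝ) 1 ∧ 0 < P p {ω | ∃ x, (G.percCluster ω x).Infinite}}

/-- `c_n(x)`: number of self-avoiding walks of length `n` from `x` to `y`. -/
noncomputable def sawCountTo (G : SimpleGraph V) (x y : V) (n : ℕ) : ℕ :=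
  Nat.card {w : G.Walk x y // w.IsPath ∧ w.length = n}

/-- `c_n`: number of self-avoiding walks of length `n` starting at `x`. -/
noncomputable def sawCount (G : SimpleGraph V) (x : V) (n : ℕ) : ℕ :=
  Nat.card {w : (y : V) × G.Walk x y // w.2.IsPath ∧ w.2.length = n}

/-- the connective constant `μ = inf_n c_n^{1/n}`. -/
noncomputable def connectiveConstant (G : SimpleGraph V) (x : V) : ℝ :=
  ⨅ n : ℕ+, (G.sawCount x n : ℝ) ^ (((n : ℕ) : ℝ))⁻¹

/-- the self-avoiding-walk two-point generating function `G_z(x)`. -/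
noncomputable def sawGen (G : SimpleGraph V) (x₀ : V) (z : ℝ) (x : V) : ℝ≥0∞ :=
  ∑' n : ℕ, (G.sawCountTo x₀ x n : ℝ≥0∞) * (ENNReal.ofReal z) ^ n

/-- vertex-transitivity. -/
def IsVertexTransitive (G : SimpleGraph V) : Prop :=
  ∀ x y : V, ∃ φ : G ≃g G, φ x = y

end SimpleGraph

/-!
Monotonicity of `θ(p) = P_p(|C(x)| = ∞)` in `p` comes from realising every `P_p` as the image of
one family of i.i.d. uniform variables; hence `p > p_c` gives `θ(p) > 0`, and by transitivity
`θ(p)` does not depend on `x`. Instead of the Harris–FKG inequality we use Bonferroni: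
pick `n` with `n θ(p) > 2` and `n` vertices so far apart that their connection probabilities sum
to at most `1`. Then the probabilities that both clusters of a pair are infinite sum to at least
`n θ(p) - 1 > 1`, so for some pair `x ≠ y` this probability exceeds `P_p(x ↔ y)`.
-/

namespace ProbabilityTheory

variable {ι : Type*}

lemma measurable_decide_coe_le (r : ℝ) : Measurable fun u : unitInterval => decide ((u : ℝ) ≤ r) :=
  measurable_to_bool <| by
    convert measurableSet_Iic (a := r) |>.preimage measurable_subtype_coe
    ext; simp

/-- Bernoulli(`r`) on `Bool`, realised as the law of `u ≤ r` for `u` uniform on `[0, 1]`, so that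
all parameters are coupled through the same `u`. -/
noncomputable def bernoulliBool (r : ℝ) : Measure Bool :=
  (volume : Measure unitInterval).map fun u : unitInterval => decide ((u : ℝ) ≤ r)

instance (r : ℝ) : IsProbabilityMeasure (bernoulliBool r) :=
  Measure.isProbabilityMeasure_map (measurable_decide_coe_le r).aemeasurable

lemma bernoulliBool_singleton {r : ℝ} (hr : r ∈ Icc (0 : ℝ) 1) (b : Bool) :
    bernoulliBool r {b} = ENNReal.ofReal (if b then r else 1 - r) := by
  rw [bernoulliBool, Measure.map_apply (measurable_decide_coe_le r) (measurableSet_singleton b)]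
  cases b
  · have : (fun u : unitInterval => decide ((u : ℝ) ≤ r)) ⁻¹' {false} = Ioi ⟨r, hr⟩ := by
      ext u; simp [← Subtype.coe_lt_coe]
    simp [this]
  · have : (fun u : unitInterval => decide ((u : ℝ) ≤ r)) ⁻¹' {true} = Iic ⟨r, hr⟩ := by
      ext u; simp [← Subtype.coe_le_coe]
    simp [this]

lemma bernoulliBool_one : bernoulliBool 1 = Measure.dirac true := by
  have : (fun u : unitInterval => decide ((u : ℝ) ≤ 1)) = fun _ => true :=
    funext fun u => decide_eq_true u.2.2
  simp [bernoulliBool, this]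

lemma infinitePi_bernoulliBool_mono {q p : ℝ} (hqp : q ≤ p) {A : Set (ι → Bool)}
    (hA : MeasurableSet A) (hAmono : ∀ ω ω', ω ≤ ω' → ω ∈ A → ω' ∈ A) :
    Measure.infinitePi (fun _ => bernoulliBool q) A ≤
      Measure.infinitePi (fun _ => bernoulliBool p) A := by
  have hmeas (r : ℝ) : Measurable fun (u : ι → unitInterval) i => decide ((u i : ℝ) ≤ r) :=
    measurable_pi_lambda _ fun i => (measurable_decide_coe_le r).comp (measurable_pi_apply i)
  -- couple both parameters through the same uniform variables
  have hcoupling (r : ℝ) : (Measure.infinitePi fun _ : ι => (volume : Measure unitInterval)).map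
      (fun u i => decide ((u i : ℝ) ≤ r)) = Measure.infinitePi fun _ => bernoulliBool r :=
    Measure.infinitePi_map_pi _ fun _ => measurable_decide_coe_le r
  rw [← hcoupling q, ← hcoupling p, Measure.map_apply (hmeas q) hA,
    Measure.map_apply (hmeas p) hA]
  refine measure_mono fun u hu => hAmono _ _ (fun i => ?_) hu
  exact Bool.le_iff_imp.2 fun h => decide_eq_true ((of_decide_eq_true h).trans hqp)

lemma infinitePi_bernoulliBool_map_comp (r : ℝ) (e : ι ≃ ι) :
    (Measure.infinitePi fun _ => bernoulliBool r).map (fun ω => ω ∘ e) =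
      Measure.infinitePi fun _ => bernoulliBool r := by
  convert Measure.infinitePi_map_piCongrLeft (fun _ : ι => bernoulliBool r) e.symm using 2
  ext ω i
  simp [MeasurableEquiv.coe_piCongrLeft, Equiv.piCongrLeft_apply_eq_cast]

end ProbabilityTheory

namespace MeasureTheory

variable {Ω ι : Type*} [MeasurableSpace Ω] [DecidableEq ι]

lemma sum_measure_le_measure_biUnion_add_sum_offDiag (μ : Measure Ω) (I : Finset ι)
    {A : ι → Set Ω} (hA : ∀ i, MeasurableSet (A i)) :
    ∑ i ∈ I, μ (A i) ≤ μ (⋃ i ∈ I, A i) + ∑ ij ∈ I.offDiag, μ (A ij.1 ∩ A ij.2) := by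
  induction I using Finset.induction with
  | empty => simp
  | @insert a I ha ih =>
    have hnew : μ (A a) + μ (⋃ i ∈ I, A i) ≤
        μ (⋃ i ∈ insert a I, A i) + ∑ i ∈ I, μ (A a ∩ A i) := by
      rw [← measure_union_add_inter _ (I.measurableSet_biUnion fun i _ => hA i),
        Finset.set_biUnion_insert, inter_iUnion₂]
      exact add_le_add_right (measure_biUnion_finset_le I _) _
    have hpairs : ∑ i ∈ I, μ (A a ∩ A i) + ∑ ij ∈ I.offDiag, μ (A ij.1 ∩ A ij.2) ≤
        ∑ ij ∈ (insert a I).offDiag, μ (A ij.1 ∩ A ij.2) := by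
      have hdisj : Disjoint ({a} ×ˢ I) I.offDiag :=
        Finset.disjoint_left.2 fun ij h1 h2 => ha <| by
          simp only [Finset.mem_product, Finset.mem_singleton, Finset.mem_offDiag] at h1 h2
          exact h1.1 ▸ h2.1
      rw [← Finset.sum_singleton (fun a => ∑ i ∈ I, μ (A a ∩ A i)) a, ← Finset.sum_product',
        ← Finset.sum_union hdisj, Finset.offDiag_insert ha]
      exact Finset.sum_le_sum_of_subset fun ij => by simp only [Finset.mem_union]; tauto
    calc ∑ i ∈ insert a I, μ (A i)
        ≤ μ (A a) + μ (⋃ i ∈ I, A i) + ∑ ij ∈ I.offDiag, μ (A ij.1 ∩ A ij.2) := by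
          rw [Finset.sum_insert ha, add_assoc]; gcongr
      _ ≤ μ (⋃ i ∈ insert a I, A i) + ∑ i ∈ I, μ (A a ∩ A i) +
            ∑ ij ∈ I.offDiag, μ (A ij.1 ∩ A ij.2) := by gcongr
      _ ≤ _ := by rw [add_assoc]; gcongr

lemma exists_measure_inter_diff_pos (μ : Measure Ω) [IsProbabilityMeasure μ] (I : Finset ι)
    {A : ι → Set Ω} (hA : ∀ i, MeasurableSet (A i)) (C : ι → ι → Set Ω)
    (h : 1 + ∑ ij ∈ I.offDiag, μ (C ij.1 ij.2) < ∑ i ∈ I, μ (A i)) :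
    ∃ i ∈ I, ∃ j ∈ I, i ≠ j ∧ 0 < μ ((A i ∩ A j) \ C i j) := by
  have hlt : ∑ ij ∈ I.offDiag, μ (C ij.1 ij.2) < ∑ ij ∈ I.offDiag, μ (A ij.1 ∩ A ij.2) := by
    refine (ENNReal.add_lt_add_iff_left ENNReal.one_ne_top).1 (h.trans_le ?_)
    exact (sum_measure_le_measure_biUnion_add_sum_offDiag μ I hA).trans
      (add_le_add prob_le_one le_rfl)
  obtain ⟨⟨i, j⟩, hij, hCA⟩ := Finset.exists_lt_of_sum_lt hlt
  obtain ⟨hi, hj, hne⟩ := Finset.mem_offDiag.1 hij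
  exact ⟨i, hi, j, hj, hne, (tsub_pos_of_lt hCA).trans_le le_measure_sdiff⟩

end MeasureTheory

namespace SimpleGraph

open ProbabilityTheory

variable {V : Type*} {G : SimpleGraph V} {ω ω' : G.edgeSet → Bool}
  {μ : Measure (G.edgeSet → Bool)}

lemma Walk.countable [G.LocallyFinite] (x y : V) : Countable (G.Walk x y) := by
  classical
  let f (w : G.Walk x y) : (n : ℕ) × {w : G.Walk x y // w.length = n} := ⟨w.length, w, rfl⟩
  exact (Function.LeftInverse.injective (g := fun s => s.2.1) (f := f) fun _ => rfl).countable

lemma Connected.finite_setOf_dist_le [G.LocallyFinite] (hconn : G.Connected) (x : V) (n : ℕ) :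
    {y | G.dist x y ≤ n}.Finite := by
  suffices h : ∀ n, {y | ∃ w : G.Walk y x, w.length ≤ n}.Finite by
    refine (h n).subset fun y hy => ?_
    obtain ⟨w, hw⟩ := hconn.exists_walk_length_eq_dist x y
    exact ⟨w.reverse, by rw [Walk.length_reverse, hw]; exact hy⟩
  intro n
  induction n with
  | zero =>
    refine (finite_singleton x).subset fun y ⟨w, hw⟩ => ?_
    exact Walk.eq_of_length_eq_zero (Nat.le_zero.1 hw)
  | succ n ih =>
    refine (ih.union (ih.biUnion fun z _ => (G.neighborSet z).toFinite)).subset ?_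
    rintro y ⟨_ | ⟨h, w⟩, hw⟩
    · exact Or.inl ⟨Walk.nil, Nat.zero_le n⟩
    · exact Or.inr (mem_biUnion ⟨w, Nat.succ_le_succ_iff.1 hw⟩ h.symm)

lemma Connected.countable [G.LocallyFinite] (hconn : G.Connected) : Countable V := by
  obtain ⟨x⟩ := hconn.nonempty
  rw [← countable_univ_iff]
  refine (countable_iUnion fun n : ℕ => (hconn.finite_setOf_dist_le x n).countable).mono
    fun y _ => mem_iUnion.2 ⟨G.dist x y, le_refl (G.dist x y)⟩

lemma Connected.exists_finset_card_eq_pairwise_le_dist [G.LocallyFinite] [Infinite V]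
    (hconn : G.Connected) (R n : ℕ) :
    ∃ T : Finset V, T.card = n ∧ (T : Set V).Pairwise fun x y => R ≤ G.dist x y := by
  classical
  induction n with
  | zero => exact ⟨∅, rfl, by simp⟩
  | succ n ih =>
    obtain ⟨T, hcard, hT⟩ := ih
    have hnear : (⋃ x ∈ T, {y | G.dist x y ≤ R}).Finite :=
      T.finite_toSet.biUnion fun x _ => hconn.finite_setOf_dist_le x R
    obtain ⟨v, hv⟩ := hnear.infinite_compl.nonempty
    simp only [mem_compl_iff, mem_iUnion, mem_ofPred_eq, not_exists, not_le] at hv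
    have hvT : v ∉ T := fun hvT => by simpa using hv v hvT
    refine ⟨insert v T, by rw [Finset.card_insert_of_notMem hvT, hcard], ?_⟩
    rw [Finset.coe_insert]
    refine hT.insert fun x hx _ => ⟨?_, ?_⟩
    · rw [dist_comm]; exact (hv x hx).le
    · exact (hv x hx).le

lemma openWalk_cons_iff {u v w : V} {h : G.Adj u v} {p : G.Walk v w} :
    G.openWalk ω (Walk.cons h p) ↔ ω ⟨s(u, v), h⟩ = true ∧ G.openWalk ω p := by
  refine ⟨fun hw => ⟨hw _ List.mem_cons_self, fun e he => hw e (List.mem_cons_of_mem _ he)⟩,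
    fun ⟨hfirst, hp⟩ e he => ?_⟩
  rcases List.mem_cons.1 he with rfl | he
  exacts [hfirst, hp e he]

lemma measurableSet_openWalk {x y : V} (w : G.Walk x y) : MeasurableSet {ω | G.openWalk ω w} := by
  induction w with
  | nil => simp [openWalk]
  | cons h p ih =>
    simp only [openWalk_cons_iff, ofPred_and]
    exact (measurableSet_eq_fun (measurable_pi_apply _) measurable_const).inter ih

lemma measurableSet_percConn [G.LocallyFinite] (x y : V) :
    MeasurableSet {ω | G.percConn ω x y} := by
  have := Walk.countable (G := G) x y
  simpa only [percConn, ofPred_exists] using MeasurableSet.iUnion fun w => measurableSet_openWalk w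

lemma percCluster_infinite_iff {x : V} :
    (G.percCluster ω x).Infinite ↔ ∀ F : Finset V, ∃ y ∉ F, G.percConn ω x y :=
  ⟨fun h F => by simpa [percCluster, and_comm] using h.exists_notMem_finset F, fun h hfin => by
    obtain ⟨y, hy, hxy⟩ := h hfin.toFinset
    exact hy (hfin.mem_toFinset.2 hxy)⟩

lemma measurableSet_percCluster_infinite [G.LocallyFinite] [Countable V] (x : V) :
    MeasurableSet {ω | (G.percCluster ω x).Infinite} := by
  simp only [percCluster_infinite_iff, ofPred_forall, ofPred_exists]
  refine .iInter fun F => .iUnion fun y => ?_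
  by_cases hy : y ∈ F
  · simp [hy]
  · simpa [hy] using measurableSet_percConn x y

lemma openWalk.mono (hωω' : ω ≤ ω') {x y : V} {w : G.Walk x y} (hw : G.openWalk ω w) :
    G.openWalk ω' w :=
  fun e he => Bool.le_iff_imp.1 (hωω' _) (hw e he)

lemma percCluster_mono (hωω' : ω ≤ ω') (x : V) : G.percCluster ω x ⊆ G.percCluster ω' x :=
  fun _ ⟨w, hw⟩ => ⟨w, hw.mono hωω'⟩

lemma percConn_map {W : Type*} {G' : SimpleGraph W} (f : G →g G') {ω : G'.edgeSet → Bool}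
    {x y : V} (h : G.percConn (ω ∘ f.mapEdgeSet) x y) : G'.percConn ω (f x) (f y) := by
  obtain ⟨w, hw⟩ := h
  refine ⟨w.map f, fun e he => ?_⟩
  rw [Walk.edges_map, List.mem_map] at he
  obtain ⟨e, he', rfl⟩ := he
  exact hw e he'

lemma IsBernoulliPercolation.eq_infinitePi {r : ℝ} (h : G.IsBernoulliPercolation r μ)
    (hr : r ∈ Icc (0 : ℝ) 1) :
    μ = Measure.infinitePi fun _ => bernoulliBool r := by
  classical
  refine ((Measure.isProjectiveLimit_infinitePi _).unique fun I => ?_).symm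
  refine Measure.ext_of_singleton fun g => ?_
  set b : G.edgeSet → Bool := fun e => if he : e ∈ I then g ⟨e, he⟩ else false
  have hpre : (I.restrict (π := fun _ => Bool)) ⁻¹' {g} = {ω | ∀ e ∈ I, ω e = b e} := by
    ext ω
    simp only [mem_preimage, mem_singleton_iff, funext_iff, Finset.restrict, mem_ofPred_eq, b]
    exact ⟨fun hω e he => by simp [he, hω ⟨e, he⟩], fun hω e => by simp [hω e e.2]⟩
  rw [Measure.map_apply (Finset.measurable_restrict I) (measurableSet_singleton g), hpre, h.2,
    Measure.pi_singleton, ← Finset.prod_coe_sort]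
  simp [b, bernoulliBool_singleton hr]

lemma IsBernoulliPercolation.measure_le {q p : ℝ} {ν : Measure (G.edgeSet → Bool)}
    (hμ : G.IsBernoulliPercolation q μ) (hν : G.IsBernoulliPercolation p ν)
    (hq : q ∈ Icc (0 : ℝ) 1) (hp : p ∈ Icc (0 : ℝ) 1) (hqp : q ≤ p)
    {A : Set (G.edgeSet → Bool)} (hA : MeasurableSet A)
    (hAmono : ∀ ω ω', ω ≤ ω' → ω ∈ A → ω' ∈ A) : μ A ≤ ν A := by
  rw [hμ.eq_infinitePi hq, hν.eq_infinitePi hp]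
  exact infinitePi_bernoulliBool_mono hqp hA hAmono

lemma IsVertexTransitive.measure_percCluster_infinite_le [G.LocallyFinite] [Countable V]
    (htrans : G.IsVertexTransitive) {r : ℝ} (h : G.IsBernoulliPercolation r μ)
    (hr : r ∈ Icc (0 : ℝ) 1) (x y : V) :
    μ {ω | (G.percCluster ω x).Infinite} ≤ μ {ω | (G.percCluster ω y).Infinite} := by
  obtain ⟨φ, rfl⟩ := htrans x y
  have hΦ : Measurable fun ω : G.edgeSet → Bool => ω ∘ φ.mapEdgeSet := by fun_prop
  rw [h.eq_infinitePi hr]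
  conv_lhs => rw [← infinitePi_bernoulliBool_map_comp r φ.mapEdgeSet,
    Measure.map_apply hΦ (measurableSet_percCluster_infinite x)]
  refine measure_mono fun ω hω => ?_
  refine (hω.image φ.injective.injOn).mono ?_
  rintro _ ⟨y, hy, rfl⟩
  exact percConn_map φ.toHom hy

lemma IsBernoulliPercolation.measure_exists_percCluster_infinite_eq_one [Infinite V]
    (hconn : G.Connected) (h : G.IsBernoulliPercolation 1 μ) :
    μ {ω | ∃ x, (G.percCluster ω x).Infinite} = 1 := by
  rw [h.eq_infinitePi ⟨zero_le_one, le_rfl⟩, bernoulliBool_one, Measure.infinitePi_dirac]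
  obtain ⟨x⟩ := hconn.nonempty
  refine Measure.dirac_apply_of_mem ⟨x, ?_⟩
  convert infinite_univ (α := V)
  exact eq_univ_of_forall fun y => ⟨(hconn x y).some, fun _ _ => rfl⟩

lemma exists_measure_percCluster_infinite_pos [G.LocallyFinite] [Infinite V]
    (hconn : G.Connected) {P : ℝ → Measure (G.edgeSet → Bool)}
    (hP : ∀ q ∈ Icc (0 : ℝ) 1, G.IsBernoulliPercolation q (P q)) {p : ℝ}
    (hp : p ∈ Icc (0 : ℝ) 1) (hpc : G.percCritical P < p) :
    ∃ x, 0 < P p {ω | (G.percCluster ω x).Infinite} := by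
  have := hconn.countable
  have hone : 0 < P 1 {ω | ∃ x, (G.percCluster ω x).Infinite} := by
    rw [(hP 1 ⟨zero_le_one, le_rfl⟩).measure_exists_percCluster_infinite_eq_one hconn]
    exact one_pos
  obtain ⟨q, ⟨hq, hqpos⟩, hqp⟩ := exists_lt_of_csInf_lt
    (s := {q | q ∈ Icc (0 : ℝ) 1 ∧ 0 < P q {ω | ∃ x, (G.percCluster ω x).Infinite}})
    ⟨1, ⟨zero_le_one, le_rfl⟩, hone⟩ hpc
  obtain ⟨x, hx⟩ : ∃ x, 0 < P q {ω | (G.percCluster ω x).Infinite} := by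
    by_contra! h
    refine hqpos.ne' ?_
    simpa only [ofPred_exists] using measure_iUnion_null fun x => nonpos_iff_eq_zero.1 (h x)
  refine ⟨x, hx.trans_le ?_⟩
  exact (hP q hq).measure_le (hP p hp) hq hp hqp.le (measurableSet_percCluster_infinite x)
    fun ω ω' hωω' hω => hω.mono (percCluster_mono hωω' x)

lemma Connected.exists_finset_card_eq_sum_offDiag_measure_percConn_le_one [DecidableEq V]
    [G.LocallyFinite] [Infinite V] (hconn : G.Connected)
    (hdecay : ∀ ε : ℝ, 0 < ε → ∃ R : ℕ, ∀ x y : V, R ≤ G.dist x y →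
      μ {ω | G.percConn ω x y} ≤ ENNReal.ofReal ε) (n : ℕ) :
    ∃ T : Finset V, T.card = n ∧ ∑ xy ∈ T.offDiag, μ {ω | G.percConn ω xy.1 xy.2} ≤ 1 := by
  set N := n ^ 2 + 1
  obtain ⟨R, hR⟩ := hdecay (N : ℝ)⁻¹ (by positivity)
  obtain ⟨T, hTcard, hTfar⟩ := hconn.exists_finset_card_eq_pairwise_le_dist R n
  refine ⟨T, hTcard, ?_⟩
  calc ∑ xy ∈ T.offDiag, μ {ω | G.percConn ω xy.1 xy.2}
      ≤ ∑ xy ∈ T.offDiag, (N : ℝ≥0∞)⁻¹ := by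
        refine Finset.sum_le_sum fun xy hxy => ?_
        obtain ⟨hx, hy, hne⟩ := Finset.mem_offDiag.1 hxy
        have := hR _ _ (hTfar hx hy hne)
        rwa [ENNReal.ofReal_inv_of_pos (by positivity), ENNReal.ofReal_natCast] at this
    _ ≤ N * (N : ℝ≥0∞)⁻¹ := by
        rw [Finset.sum_const, nsmul_eq_mul, Finset.offDiag_card, hTcard]
        gcongr
        lia
    _ = 1 := ENNReal.mul_inv_cancel (by simp [N]) (ENNReal.natCast_ne_top _)

end SimpleGraph

/-- on a transitive graph, if `p > p_c` and the two-point function tends to zero at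
large distances, then with positive probability two fixed far-away vertices lie in distinct
infinite clusters; consequently there is more than one infinite cluster with positive
probability. -/
theorem stmt_7 {V : Type*} [DecidableEq V] (G : SimpleGraph V)
    [∀ v, Fintype (G.neighborSet v)] [Infinite V] (hconn : G.Connected)
    (htrans : G.IsVertexTransitive)
    (P : ℝ → MeasureTheory.Measure (G.edgeSet → Bool))
    (hP : ∀ q ∈ Set.Icc (0:ℝ) 1, G.IsBernoulliPercolation q (P q))
    (p : ℝ) (hp : p ∈ Set.Icc (0:ℝ) 1) (hpc : G.percCritical P < p)
    (hdecay : ∀ ε : ℝ, 0 < ε → ∃ R : ℕ, ∀ x y : V, R ≤ G.dist x y →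
      P p {ω | G.percConn ω x y} ≤ ENNReal.ofReal ε) :
    (∃ x y : V,
        0 < P p {ω | (G.percCluster ω x).Infinite ∧ (G.percCluster ω y).Infinite ∧
          ¬ G.percConn ω x y}) ∧
      0 < P p {ω | ∃ a b : V, (G.percCluster ω a).Infinite ∧ (G.percCluster ω b).Infinite ∧
          ¬ G.percConn ω a b} := by
  have := hconn.countable
  have := (hP p hp).1
  obtain ⟨x₀, hθ⟩ := SimpleGraph.exists_measure_percCluster_infinite_pos hconn hP hp hpc
  obtain ⟨n, hn⟩ := ENNReal.exists_nat_mul_gt hθ.ne' (ENNReal.ofNat_ne_top (n := 2))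
  obtain ⟨T, hTcard, hTconn⟩ :=
    hconn.exists_finset_card_eq_sum_offDiag_measure_percConn_le_one hdecay n
  obtain ⟨x, -, y, -, -, hxy⟩ := exists_measure_inter_diff_pos (P p) T
    SimpleGraph.measurableSet_percCluster_infinite (fun x y => {ω | G.percConn ω x y}) <| by
      calc 1 + ∑ xy ∈ T.offDiag, P p {ω | G.percConn ω xy.1 xy.2} ≤ 2 := by
            rw [← one_add_one_eq_two]; gcongr
        _ < n * P p {ω | (G.percCluster ω x₀).Infinite} := hn
        _ ≤ ∑ x ∈ T, P p {ω | (G.percCluster ω x).Infinite} := by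
            rw [← hTcard, ← nsmul_eq_mul, ← Finset.sum_const]
            exact Finset.sum_le_sum fun x _ =>
              htrans.measure_percCluster_infinite_le (hP p hp) hp x₀ x
  have hpair : 0 < P p {ω | (G.percCluster ω x).Infinite ∧ (G.percCluster ω y).Infinite ∧
      ¬ G.percConn ω x y} :=
    hxy.trans_le (measure_mono fun ω ⟨⟨hx, hy⟩, hxy⟩ => ⟨hx, hy, hxy⟩)
  exact ⟨⟨x, y, hpair⟩, hpair.trans_le (measure_mono fun ω hω => ⟨x, y, hω⟩)⟩
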